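/- arXiv:2511.02437 — 2 statements merged into one kernel-verified Lean document; each statement's English description precedes it below -/
import Mathlib

section
/- Let y1, y2, y3 : [0,∞) → ℝ be nonnegative differentiable functions satisfying dy1/dt = -α1 y1 y2, dy2/dt = -α2 y2 y3, dy3/dt = -α3 y3 y1, with αi > 0 and yi(0) > 0. Set S(t) = y1(t)+y2(t)+y3(t) and assume S(0) > 0 and S(t) > 0 for all t. Then S(t) ≥ 1/((α_max/3) t + 1/S(0)) for all t ≥ 0, where α_max = max(α1,α2,α3). Consequently, max(y1(t), y2(t), y3(t)) ≥ 1/(α_max t + 3/S(0)) for all t ≥ 0. -/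
/-!
Each product `yᵢ yⱼ` is nonnegative and `αᵢ ≤ α_max`, so
`S' = -(α₁ y₁ y₂ + α₂ y₂ y₃ + α₃ y₃ y₁) ≥ -α_max (y₁ y₂ + y₂ y₃ + y₃ y₁) ≥ -(α_max / 3) S²`.
Hence `(1 / S)' = -S' / S² ≤ α_max / 3`, so `1 / S(t) ≤ (α_max / 3) t + 1 / S(0)`.
The bound on the largest `yᵢ` follows from `S ≤ 3 max(y₁, y₂, y₃)`.
-/

open Set

lemma mul_add_mul_add_mul_le_sq_div_three (a b c : ℝ) :
    a * b + b * c + c * a ≤ (a + b + c) ^ 2 / 3 := by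
  nlinarith [sq_nonneg (a - b), sq_nonneg (b - c), sq_nonneg (c - a)]

lemma weighted_cyclic_sum_le_sq_div_three {α α₁ α₂ α₃ a b c : ℝ} (hα : 0 ≤ α)
    (h₁ : α₁ ≤ α) (h₂ : α₂ ≤ α) (h₃ : α₃ ≤ α) (ha : 0 ≤ a) (hb : 0 ≤ b) (hc : 0 ≤ c) :
    α₁ * a * b + α₂ * b * c + α₃ * c * a ≤ α / 3 * (a + b + c) ^ 2 :=
  calc α₁ * a * b + α₂ * b * c + α₃ * c * a ≤ α * (a * b + b * c + c * a) := by
        linarith [mul_le_mul_of_nonneg_right h₁ (mul_nonneg ha hb),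
          mul_le_mul_of_nonneg_right h₂ (mul_nonneg hb hc),
          mul_le_mul_of_nonneg_right h₃ (mul_nonneg hc ha)]
    _ ≤ α * ((a + b + c) ^ 2 / 3) :=
        mul_le_mul_of_nonneg_left (mul_add_mul_add_mul_le_sq_div_three a b c) hα
    _ = α / 3 * (a + b + c) ^ 2 := by ring

lemma add_add_le_three_mul_max (a b c : ℝ) : a + b + c ≤ 3 * max (max a b) c := by
  have := le_max_left (max a b) c
  linarith [le_max_left a b, le_max_right a b, le_max_right (max a b) c]

/-- Comparison with the Riccati equation `u' = -c u²`, whose solution is `1 / (c t + 1 / u 0)`. -/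
lemma inv_le_mul_add_inv_of_neg_mul_sq_le_deriv {S S' : ℝ → ℝ} {c : ℝ}
    (hpos : ∀ t ∈ Ici (0 : ℝ), 0 < S t) (hderiv : ∀ t ∈ Ici (0 : ℝ), HasDerivAt S (S' t) t)
    (hineq : ∀ t ∈ Ici (0 : ℝ), -c * S t ^ 2 ≤ S' t) {t : ℝ} (ht : 0 ≤ t) :
    (S t)⁻¹ ≤ c * t + (S 0)⁻¹ := by
  have hg : ∀ x ∈ Ici (0 : ℝ),
      HasDerivAt (fun x => c * x - (S x)⁻¹) (c - -S' x / S x ^ 2) x := fun x hx => by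
    simpa only [mul_one] using
      ((hasDerivAt_id' x).const_mul c).fun_sub ((hderiv x hx).fun_inv (hpos x hx).ne')
  have hmono : MonotoneOn (fun x => c * x - (S x)⁻¹) (Ici 0) := by
    refine monotoneOn_of_hasDerivWithinAt_nonneg (f' := fun x => c - -S' x / S x ^ 2)
      (convex_Ici 0) (fun x hx => (hg x hx).continuousAt.continuousWithinAt)
      (fun x hx => ?_) (fun x hx => ?_)
    all_goals replace hx := interior_subset hx
    · exact (hg x hx).hasDerivWithinAt
    · rw [sub_nonneg, div_le_iff₀ (pow_pos (hpos x hx) 2)]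
      linarith [hineq x hx]
  have := hmono self_mem_Ici (mem_Ici.mpr ht) ht
  simp only [mul_zero, zero_sub] at this
  linarith

theorem three_cycle_lower_bound_general (α1 α2 α3 : ℝ) (hα1 : 0 < α1)
    (y1 y2 y3 : ℝ → ℝ)
    (hpos1 : ∀ t : ℝ, 0 ≤ t → 0 ≤ y1 t)
    (hpos2 : ∀ t : ℝ, 0 ≤ t → 0 ≤ y2 t)
    (hpos3 : ∀ t : ℝ, 0 ≤ t → 0 ≤ y3 t)
    (h1 : ∀ t : ℝ, 0 ≤ t → HasDerivAt y1 (-α1 * y1 t * y2 t) t)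
    (h2 : ∀ t : ℝ, 0 ≤ t → HasDerivAt y2 (-α2 * y2 t * y3 t) t)
    (h3 : ∀ t : ℝ, 0 ≤ t → HasDerivAt y3 (-α3 * y3 t * y1 t) t)
    (hS : ∀ t : ℝ, 0 ≤ t → 0 < y1 t + y2 t + y3 t) :
    (∀ t : ℝ, 0 ≤ t →
      1 / ((max (max α1 α2) α3 / 3) * t + 1 / (y1 0 + y2 0 + y3 0)) ≤
        y1 t + y2 t + y3 t) ∧
    (∀ t : ℝ, 0 ≤ t →
      1 / (max (max α1 α2) α3 * t + 3 / (y1 0 + y2 0 + y3 0)) ≤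
        max (max (y1 t) (y2 t)) (y3 t)) := by
  set α := max (max α1 α2) α3
  set S : ℝ → ℝ := fun t => y1 t + y2 t + y3 t
  have hα1_le : α1 ≤ α := (le_max_left _ _).trans (le_max_left _ _)
  have hα2_le : α2 ≤ α := (le_max_right _ _).trans (le_max_left _ _)
  have hα3_le : α3 ≤ α := le_max_right _ _
  have hS_ge : ∀ t, 0 ≤ t → 1 / (α / 3 * t + 1 / S 0) ≤ S t := by
    intro t ht
    rw [one_div, one_div]
    refine inv_le_of_inv_le₀ (hS t ht) (inv_le_mul_add_inv_of_neg_mul_sq_le_deriv hS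
      (fun x hx => ((h1 x hx).add (h2 x hx)).add (h3 x hx)) (fun x hx => ?_) ht)
    have := weighted_cyclic_sum_le_sq_div_three (hα1.le.trans hα1_le) hα1_le hα2_le hα3_le
      (hpos1 x hx) (hpos2 x hx) (hpos3 x hx)
    linarith
  refine ⟨hS_ge, fun t ht => ?_⟩
  calc 1 / (α * t + 3 / S 0) = 1 / (α / 3 * t + 1 / S 0) / 3 := by
        rw [div_div]
        congr 1
        ring
    _ ≤ max (max (y1 t) (y2 t)) (y3 t) := by
        linarith [hS_ge t ht, add_add_le_three_mul_max (y1 t) (y2 t) (y3 t)]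

theorem three_cycle_lower_bound (α1 α2 α3 : ℝ) (hα1 : 0 < α1) (hα2 : 0 < α2) (hα3 : 0 < α3)
    (y1 y2 y3 : ℝ → ℝ)
    (hpos1 : ∀ t : ℝ, 0 ≤ t → 0 ≤ y1 t)
    (hpos2 : ∀ t : ℝ, 0 ≤ t → 0 ≤ y2 t)
    (hpos3 : ∀ t : ℝ, 0 ≤ t → 0 ≤ y3 t)
    (h1 : ∀ t : ℝ, 0 ≤ t → HasDerivAt y1 (-α1 * y1 t * y2 t) t)
    (h2 : ∀ t : ℝ, 0 ≤ t → HasDerivAt y2 (-α2 * y2 t * y3 t) t)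
    (h3 : ∀ t : ℝ, 0 ≤ t → HasDerivAt y3 (-α3 * y3 t * y1 t) t)
    (h10 : 0 < y1 0) (h20 : 0 < y2 0) (h30 : 0 < y3 0)
    (hS : ∀ t : ℝ, 0 ≤ t → 0 < y1 t + y2 t + y3 t) :
    (∀ t : ℝ, 0 ≤ t →
      1 / ((max (max α1 α2) α3 / 3) * t + 1 / (y1 0 + y2 0 + y3 0)) ≤
        y1 t + y2 t + y3 t) ∧
    (∀ t : ℝ, 0 ≤ t →
      1 / (max (max α1 α2) α3 * t + 3 / (y1 0 + y2 0 + y3 0)) ≤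
        max (max (y1 t) (y2 t)) (y3 t)) :=
  three_cycle_lower_bound_general α1 α2 α3 hα1 y1 y2 y3 hpos1 hpos2 hpos3 h1 h2 h3 hS
end

section
/- Let y1, y2, y3, y4 : [0,∞) → ℝ be a solution of the system dy1/dt = -α1 y1 y2, dy2/dt = -α2 y2 y3, dy3/dt = -α3 y3 y1, dy4/dt = α1 y1 y2 + α2 y2 y3 + α3 y3 y1 with αi > 0, yi(0) > 0, and suppose 0 < yi(t) < 1 for all t and each yi(t) converges to a limit Li as t → ∞. Then L1 = L2 = L3 = 0. -/
/-!
If `y₁ → L₁ > 0`, then `y₃' = -α₃ y₃ y₁` makes `y₃` decay exponentially, so `y₃` is integrable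
and `(log y₂)' = -α₂ y₃` keeps `y₂` away from zero: `L₂ > 0`. But then `y₁' = -α₁ y₁ y₂` tends
to `-α₁ L₁ L₂ ≠ 0`, which is impossible for a convergent function. Rotating the indices gives
the same for `y₂` and `y₃`.
-/

open Filter Topology

lemma exists_eventually_le_of_hasDerivAt_nonneg {g g' : ℝ → ℝ}
    (hg : ∀ᶠ t in atTop, HasDerivAt g (g' t) t) (hg' : ∀ᶠ t in atTop, 0 ≤ g' t) :
    ∃ C, ∀ᶠ t in atTop, C ≤ g t := by
  obtain ⟨T, hT⟩ := eventually_atTop.1 (hg.and hg')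
  have hmono : MonotoneOn g (Set.Ici T) := by
    refine monotoneOn_of_hasDerivWithinAt_nonneg (f' := g') (convex_Ici T)
      (fun t ht => (hT t ht).1.continuousAt.continuousWithinAt) (fun t ht => ?_) (fun t ht => ?_)
    all_goals rw [interior_Ici] at ht
    · exact (hT t (le_of_lt ht)).1.hasDerivWithinAt
    · exact (hT t (le_of_lt ht)).2
  exact ⟨g T, eventually_atTop.2 ⟨T, fun t ht => hmono Set.self_mem_Ici ht ht⟩⟩

lemma nonneg_of_tendsto_of_hasDerivAt_tendsto {f f' : ℝ → ℝ} {L M : ℝ}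
    (hf : ∀ᶠ t in atTop, HasDerivAt f (f' t) t) (hfL : Tendsto f atTop (𝓝 L))
    (hf'M : Tendsto f' atTop (𝓝 M)) : 0 ≤ M := by
  by_contra! hM
  have hf'_le : ∀ᶠ t in atTop, f' t ≤ M / 2 := hf'M.eventually (ge_mem_nhds (by linarith))
  obtain ⟨C, hC⟩ := exists_eventually_le_of_hasDerivAt_nonneg (g := fun t => M / 2 * t - f t)
    (hf.mono fun t h => ((hasDerivAt_id t).const_mul (M / 2)).sub h)
    (hf'_le.mono fun t h => by simp only [mul_one]; linarith)
  have hlin : Tendsto (fun t => M / 2 * t - C) atTop atBot :=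
    tendsto_atBot_add_const_right _ _ (tendsto_id.const_mul_atTop_of_neg (by linarith))
  refine not_tendsto_nhds_of_tendsto_atBot (tendsto_atBot_mono' _ ?_ hlin) L hfL
  filter_upwards [hC] with t ht
  linarith

lemma eq_zero_of_tendsto_of_hasDerivAt_tendsto {f f' : ℝ → ℝ} {L M : ℝ}
    (hf : ∀ᶠ t in atTop, HasDerivAt f (f' t) t) (hfL : Tendsto f atTop (𝓝 L))
    (hf'M : Tendsto f' atTop (𝓝 M)) : M = 0 := by
  have hneg : 0 ≤ -M := nonneg_of_tendsto_of_hasDerivAt_tendsto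
    (hf.mono fun _ h => h.neg) hfL.neg hf'M.neg
  linarith [nonneg_of_tendsto_of_hasDerivAt_tendsto hf hfL hf'M]

lemma limit_eq_zero_of_hasDerivAt_neg_mul {c Lq Lp : ℝ} {q p : ℝ → ℝ} (hc : c ≠ 0)
    (hq : ∀ᶠ t in atTop, HasDerivAt q (-c * q t * p t) t) (hqL : Tendsto q atTop (𝓝 Lq))
    (hpL : Tendsto p atTop (𝓝 Lp)) (hLp : Lp ≠ 0) : Lq = 0 := by
  have h := eq_zero_of_tendsto_of_hasDerivAt_tendsto hq hqL ((hqL.const_mul (-c)).mul hpL)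
  simpa [hc, hLp] using h

lemma limit_pos_of_hasDerivAt_neg_mul {c d Lp Lr : ℝ} {p q r : ℝ → ℝ} (hc : 0 < c) (hd : 0 ≤ d)
    (hr : ∀ᶠ t in atTop, HasDerivAt r (-d * r t * q t) t)
    (hq : ∀ᶠ t in atTop, HasDerivAt q (-c * q t * p t) t)
    (hrpos : ∀ᶠ t in atTop, 0 < r t) (hqpos : ∀ᶠ t in atTop, 0 ≤ q t)
    (hpL : Tendsto p atTop (𝓝 Lp)) (hLp : 0 < Lp) (hrL : Tendsto r atTop (𝓝 Lr)) : 0 < Lr := by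
  obtain ⟨k, hk, hkc⟩ : ∃ k, 0 ≤ k ∧ k * c * Lp = 2 * d :=
    ⟨2 * d / (c * Lp), by positivity, by field_simp⟩
  have hp : ∀ᶠ t in atTop, Lp / 2 ≤ p t := hpL.eventually (le_mem_nhds (by linarith))
  -- `(log r)' = -d q ≥ k q'` once `p ≥ Lp / 2`, so `log r - k q` is eventually nondecreasing.
  obtain ⟨C, hC⟩ := exists_eventually_le_of_hasDerivAt_nonneg
    (g := fun t => Real.log (r t) - k * q t) (g' := fun t => q t * (k * c * p t - d))
    (by
      filter_upwards [hr, hq, hrpos] with t hrt hqt hrt_pos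
      refine ((hrt.log hrt_pos.ne').sub (hqt.const_mul k)).congr_deriv ?_
      field_simp
      ring)
    (by
      filter_upwards [hqpos, hp] with t hqt hpt
      have hkcp : d ≤ k * c * p t := by
        nlinarith [mul_le_mul_of_nonneg_left hpt (mul_nonneg hk hc.le)]
      exact mul_nonneg hqt (by linarith))
  have hr_ge : ∀ᶠ t in atTop, Real.exp C ≤ r t := by
    filter_upwards [hC, hqpos, hrpos] with t hCt hqt hrt
    exact (Real.le_log_iff_exp_le hrt).1 (by linarith [mul_nonneg hk hqt])
  exact (Real.exp_pos C).trans_le (ge_of_tendsto hrL hr_ge)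

lemma limit_eq_zero_of_cycle {a b c Lu Lv : ℝ} {u v w : ℝ → ℝ} (ha : a ≠ 0)
    (hb : 0 ≤ b) (hc : 0 < c)
    (hu : ∀ᶠ t in atTop, HasDerivAt u (-a * u t * v t) t)
    (hv : ∀ᶠ t in atTop, HasDerivAt v (-b * v t * w t) t)
    (hw : ∀ᶠ t in atTop, HasDerivAt w (-c * w t * u t) t)
    (hupos : ∀ᶠ t in atTop, 0 < u t) (hvpos : ∀ᶠ t in atTop, 0 < v t)
    (hwpos : ∀ᶠ t in atTop, 0 < w t)
    (huL : Tendsto u atTop (𝓝 Lu)) (hvL : Tendsto v atTop (𝓝 Lv)) : Lu = 0 := by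
  have hLu : 0 ≤ Lu := ge_of_tendsto huL (hupos.mono fun _ h => h.le)
  by_contra hne
  have hLv : 0 < Lv := limit_pos_of_hasDerivAt_neg_mul hc hb hv hw hvpos
    (hwpos.mono fun _ h => h.le) huL (lt_of_le_of_ne hLu (Ne.symm hne)) hvL
  exact hne (limit_eq_zero_of_hasDerivAt_neg_mul ha hu huL hvL hLv.ne')

theorem three_cycle_limits_zero_general (α1 α2 α3 : ℝ) (hα1 : 0 < α1) (hα2 : 0 < α2) (hα3 : 0 < α3)
    (y1 y2 y3 : ℝ → ℝ) (L1 L2 L3 : ℝ)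
    (h1 : ∀ t : ℝ, 0 ≤ t → HasDerivAt y1 (-α1 * y1 t * y2 t) t)
    (h2 : ∀ t : ℝ, 0 ≤ t → HasDerivAt y2 (-α2 * y2 t * y3 t) t)
    (h3 : ∀ t : ℝ, 0 ≤ t → HasDerivAt y3 (-α3 * y3 t * y1 t) t)
    (hb1 : ∀ t : ℝ, 0 ≤ t → 0 < y1 t ∧ y1 t < 1)
    (hb2 : ∀ t : ℝ, 0 ≤ t → 0 < y2 t ∧ y2 t < 1)
    (hb3 : ∀ t : ℝ, 0 ≤ t → 0 < y3 t ∧ y3 t < 1)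
    (hL1 : Tendsto y1 atTop (nhds L1))
    (hL2 : Tendsto y2 atTop (nhds L2))
    (hL3 : Tendsto y3 atTop (nhds L3)) :
    L1 = 0 ∧ L2 = 0 ∧ L3 = 0 := by
  have ev {P : ℝ → Prop} (h : ∀ t : ℝ, 0 ≤ t → P t) : ∀ᶠ t in atTop, P t :=
    (eventually_ge_atTop 0).mono h
  have p1 := ev fun t ht => (hb1 t ht).1
  have p2 := ev fun t ht => (hb2 t ht).1
  have p3 := ev fun t ht => (hb3 t ht).1
  exact ⟨limit_eq_zero_of_cycle hα1.ne' hα2.le hα3 (ev h1) (ev h2) (ev h3) p1 p2 p3 hL1 hL2,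
    limit_eq_zero_of_cycle hα2.ne' hα3.le hα1 (ev h2) (ev h3) (ev h1) p2 p3 p1 hL2 hL3,
    limit_eq_zero_of_cycle hα3.ne' hα1.le hα2 (ev h3) (ev h1) (ev h2) p3 p1 p2 hL3 hL1⟩

theorem three_cycle_limits_zero (α1 α2 α3 : ℝ) (hα1 : 0 < α1) (hα2 : 0 < α2) (hα3 : 0 < α3)
    (y1 y2 y3 y4 : ℝ → ℝ) (L1 L2 L3 L4 : ℝ)
    (h1 : ∀ t : ℝ, 0 ≤ t → HasDerivAt y1 (-α1 * y1 t * y2 t) t)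
    (h2 : ∀ t : ℝ, 0 ≤ t → HasDerivAt y2 (-α2 * y2 t * y3 t) t)
    (h3 : ∀ t : ℝ, 0 ≤ t → HasDerivAt y3 (-α3 * y3 t * y1 t) t)
    (h4 : ∀ t : ℝ, 0 ≤ t →
      HasDerivAt y4 (α1 * y1 t * y2 t + α2 * y2 t * y3 t + α3 * y3 t * y1 t) t)
    (h10 : 0 < y1 0) (h20 : 0 < y2 0) (h30 : 0 < y3 0) (h40 : 0 < y4 0)
    (hb1 : ∀ t : ℝ, 0 ≤ t → 0 < y1 t ∧ y1 t < 1)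
    (hb2 : ∀ t : ℝ, 0 ≤ t → 0 < y2 t ∧ y2 t < 1)
    (hb3 : ∀ t : ℝ, 0 ≤ t → 0 < y3 t ∧ y3 t < 1)
    (hb4 : ∀ t : ℝ, 0 ≤ t → 0 < y4 t ∧ y4 t < 1)
    (hL1 : Tendsto y1 atTop (nhds L1))
    (hL2 : Tendsto y2 atTop (nhds L2))
    (hL3 : Tendsto y3 atTop (nhds L3))
    (hL4 : Tendsto y4 atTop (nhds L4)) :
    L1 = 0 ∧ L2 = 0 ∧ L3 = 0 :=
  three_cycle_limits_zero_general α1 α2 α3 hα1 hα2 hα3 y1 y2 y3 L1 L2 L3 h1 h2 h3 hb1 hb2 hb3 hL1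
    hL2 hL3
end
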